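/- Let B = {x ∈ ℓ²(ℕ, ℝ) : ‖x‖ < 1} be the open unit ball of ℓ²(ℕ, ℝ). Then for every x ∈ B the series ∑ᵢ xᵢ²/(1 − xᵢ²) is summable, and the function G : B → ℝ defined by G(x) = exp(−∑ᵢ xᵢ²/(1 − xᵢ²)) (the value of the infinite product ∏ᵢ exp(−xᵢ²/(1 − xᵢ²))) is continuous on B. -/

import Mathlib

/-!
Write `φ(t) = t²/(1 − t²)` (`sqRatio`). Since `φ(a) − φ(b) = (a − b)(a + b)/((1 − a²)(1 − b²))`
and every coordinate of `x ∈ ℓ²` is bounded by `‖x‖`, on the ball `‖x‖, ‖y‖ ≤ r < 1` we get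
`|φ(xᵢ) − φ(yᵢ)| ≤ |xᵢ − yᵢ| |xᵢ + yᵢ| / (1 − r²)²`, and Cauchy–Schwarz bounds the sum of the
right-hand sides by `2‖x − y‖/(1 − r²)²`. So `x ↦ ∑ᵢ φ(xᵢ)` is summable (take `y = 0`) and
Lipschitz on every such ball, hence continuous on the open unit ball, and so is
`G = exp(−∑ᵢ φ(xᵢ))`.
-/

open scoped ENNReal
open Metric

/-- The infinite product `G = ∏ᵢ exp(−xᵢ²/(1−xᵢ²))` of the paper's Example 1.1,
with value `exp(−∑ᵢ xᵢ²/(1−xᵢ²))`. -/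
noncomputable def Gprod (x : lp (fun _ : ℕ => ℝ) 2) : ℝ :=
  Real.exp (-∑' i : ℕ, ((x : ∀ _ : ℕ, ℝ) i) ^ 2 / (1 - ((x : ∀ _ : ℕ, ℝ) i) ^ 2))

noncomputable def sqRatio (t : ℝ) : ℝ := t ^ 2 / (1 - t ^ 2)

@[simp]
lemma sqRatio_zero : sqRatio 0 = 0 := by simp [sqRatio]

lemma sqRatio_sub_sqRatio {a b : ℝ} (ha : 1 - a ^ 2 ≠ 0) (hb : 1 - b ^ 2 ≠ 0) :
    sqRatio a - sqRatio b = (a - b) * (a + b) / ((1 - a ^ 2) * (1 - b ^ 2)) := by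
  rw [sqRatio, sqRatio, div_sub_div _ _ ha hb]
  ring

lemma abs_sqRatio_sub_sqRatio_le {a b r : ℝ} (hr : r < 1) (ha : |a| ≤ r) (hb : |b| ≤ r) :
    |sqRatio a - sqRatio b| ≤ |a - b| * |a + b| / (1 - r ^ 2) ^ 2 := by
  have hr₀ : 0 ≤ r := (abs_nonneg a).trans ha
  have hr₁ : 0 < 1 - r ^ 2 := by nlinarith
  have ha' : 1 - r ^ 2 ≤ 1 - a ^ 2 := by nlinarith [sq_abs a, abs_nonneg a]
  have hb' : 1 - r ^ 2 ≤ 1 - b ^ 2 := by nlinarith [sq_abs b, abs_nonneg b]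
  rw [sqRatio_sub_sqRatio (by linarith) (by linarith), abs_div, abs_mul,
    abs_of_pos (by nlinarith : 0 < (1 - a ^ 2) * (1 - b ^ 2)), sq (1 - r ^ 2)]
  gcongr
  exact hr₁.le.trans ha'

section ell2

variable {ι : Type*}

lemma holderConjugate_two_two_toReal :
    (2 : ℝ≥0∞).toReal.HolderConjugate (2 : ℝ≥0∞).toReal := by
  simpa using Real.HolderConjugate.two_two

lemma abs_sqRatio_apply_sub_le {r : ℝ} (hr : r < 1) {x y : lp (fun _ : ι => ℝ) 2}
    (hx : ‖x‖ ≤ r) (hy : ‖y‖ ≤ r) (i : ι) :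
    |sqRatio (x i) - sqRatio (y i)| ≤ ‖(x - y) i‖ * ‖(x + y) i‖ / (1 - r ^ 2) ^ 2 := by
  simpa using abs_sqRatio_sub_sqRatio_le hr
    ((lp.norm_apply_le_norm two_ne_zero x i).trans hx)
    ((lp.norm_apply_le_norm two_ne_zero y i).trans hy)

lemma summable_sqRatio_sub {r : ℝ} (hr : r < 1) {x y : lp (fun _ : ι => ℝ) 2}
    (hx : ‖x‖ ≤ r) (hy : ‖y‖ ≤ r) :
    Summable fun i => sqRatio (x i) - sqRatio (y i) :=
  .of_norm_bounded ((lp.summable_mul holderConjugate_two_two_toReal (x - y) (x + y)).div_const _)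
    (abs_sqRatio_apply_sub_le hr hx hy)

lemma summable_sqRatio {x : lp (fun _ : ι => ℝ) 2} (hx : ‖x‖ < 1) :
    Summable fun i => sqRatio (x i) := by
  simpa using summable_sqRatio_sub hx (le_refl _) (norm_zero.trans_le (norm_nonneg x))

lemma abs_tsum_sqRatio_sub_le {r : ℝ} (hr : r < 1) {x y : lp (fun _ : ι => ℝ) 2}
    (hx : ‖x‖ ≤ r) (hy : ‖y‖ ≤ r) :
    |∑' i, sqRatio (x i) - ∑' i, sqRatio (y i)| ≤ 2 / (1 - r ^ 2) ^ 2 * ‖x - y‖ := by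
  have hxy : ‖x + y‖ ≤ 2 := (norm_add_le x y).trans (by linarith)
  have hHolder := lp.tsum_mul_le_mul_norm holderConjugate_two_two_toReal (x - y) (x + y)
  rw [← (summable_sqRatio (hx.trans_lt hr)).tsum_sub (summable_sqRatio (hy.trans_lt hr))]
  calc |∑' i, (sqRatio (x i) - sqRatio (y i))|
      ≤ ∑' i, ‖(x - y) i‖ * ‖(x + y) i‖ / (1 - r ^ 2) ^ 2 :=
        (Real.norm_eq_abs _).symm.trans_le <|
          tsum_of_norm_bounded (hHolder.1.div_const _).hasSum (abs_sqRatio_apply_sub_le hr hx hy)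
    _ = (∑' i, ‖(x - y) i‖ * ‖(x + y) i‖) / (1 - r ^ 2) ^ 2 := tsum_div_const ..
    _ ≤ ‖x - y‖ * ‖x + y‖ / (1 - r ^ 2) ^ 2 := by gcongr; exact hHolder.2
    _ ≤ 2 / (1 - r ^ 2) ^ 2 * ‖x - y‖ := by
        rw [div_mul_eq_mul_div, mul_comm 2]; gcongr

lemma lipschitzOnWith_tsum_sqRatio {r : ℝ} (hr : r < 1) :
    LipschitzOnWith (2 / (1 - r ^ 2) ^ 2).toNNReal
      (fun x : lp (fun _ : ι => ℝ) 2 => ∑' i, sqRatio (x i)) (closedBall 0 r) :=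
  .of_dist_le' fun x hx y hy => by
    rw [mem_closedBall_zero_iff] at hx hy
    simpa [Real.dist_eq, dist_eq_norm] using abs_tsum_sqRatio_sub_le hr hx hy

lemma locallyLipschitzOn_tsum_sqRatio :
    LocallyLipschitzOn (ball 0 1) fun x : lp (fun _ : ι => ℝ) 2 => ∑' i, sqRatio (x i) := by
  intro x hx
  rw [mem_ball_zero_iff] at hx
  have hr : ‖x‖ < (‖x‖ + 1) / 2 := by linarith
  exact ⟨_, _, mem_nhdsWithin_of_mem_nhds (closedBall_mem_nhds_of_mem (mem_ball_zero_iff.2 hr)),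
    lipschitzOnWith_tsum_sqRatio (by linarith)⟩

end ell2

/-- Example 1.1 (1): on the open unit ball of `ℓ²(ℕ, ℝ)` the series
`∑ᵢ xᵢ²/(1−xᵢ²)` is summable and the infinite product `G` is continuous. -/
theorem infinite_product_G_continuous :
    (∀ x : lp (fun _ : ℕ => ℝ) 2, ‖x‖ < 1 →
      Summable (fun i : ℕ => ((x : ∀ _ : ℕ, ℝ) i) ^ 2 / (1 - ((x : ∀ _ : ℕ, ℝ) i) ^ 2))) ∧
    ContinuousOn Gprod {x : lp (fun _ : ℕ => ℝ) 2 | ‖x‖ < 1} := by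
  refine ⟨fun x hx => summable_sqRatio hx, ?_⟩
  rw [← ball_zero_eq]
  exact locallyLipschitzOn_tsum_sqRatio.continuousOn.neg.rexp
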